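/- arXiv:1809.06816 — 8 statements merged into one kernel-verified Lean document; each statement's English description precedes it below -/
import Mathlib

section
/- The double arrow space 𝔸 is separable: the set of points ⟨q,0⟩ with q a rational in (0,1] is countable and dense in 𝔸. -/
open Set Topology

def DoubleArrow : Type :=
  {p : ℝ ×ₗ Bool // ((ofLex p).2 = false ∧ (ofLex p).1 ∈ Set.Ioc (0:ℝ) 1) ∨
    ((ofLex p).2 = true ∧ (ofLex p).1 ∈ Set.Ico (0:ℝ) 1)}

noncomputable instance : LinearOrder DoubleArrow := Subtype.instLinearOrder _
noncomputable instance : TopologicalSpace DoubleArrow := Preorder.topology DoubleArrow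
instance : OrderTopology DoubleArrow := ⟨rfl⟩

/-- The points ⟨q,0⟩ with q rational in (0,1]. -/
def ratLowerPoints : Set DoubleArrow :=
  {a | (ofLex a.1).2 = false ∧ ∃ q : ℚ, 0 < q ∧ q ≤ 1 ∧ (ofLex a.1).1 = (q : ℝ)}

/-! In the order topology a supremum of a set lies in its closure. The point ⟨r,0⟩ (r > 0) is the
supremum of the points ⟨q,0⟩ with q < r rational, and ⟨r,1⟩ (r < 1) is the infimum of those with
q > r, by density of ℚ in ℝ. Countability holds because the first coordinate is injective on the
points ⟨q,0⟩. -/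

section ClosureOfOrder

variable {α : Type*} [LinearOrder α] [TopologicalSpace α] [OrderTopology α] {s : Set α} {x : α}

theorem mem_closure_of_forall_lt_inter_Ioc_nonempty (hx : ∃ l, l < x)
    (h : ∀ l < x, (s ∩ Ioc l x).Nonempty) : x ∈ closure s := by
  have hlub : IsLUB (s ∩ Iic x) x := by
    refine ⟨fun c hc => hc.2, fun b hb => not_lt.1 fun hbx => ?_⟩
    obtain ⟨c, hcs, hbc, hcx⟩ := h b hbx
    exact (hb ⟨hcs, hcx⟩).not_gt hbc
  obtain ⟨l, hl⟩ := hx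
  obtain ⟨c, hcs, -, hcx⟩ := h l hl
  exact closure_mono inter_subset_left (hlub.mem_closure ⟨c, hcs, hcx⟩)

theorem mem_closure_of_forall_gt_inter_Ico_nonempty (hx : ∃ u, x < u)
    (h : ∀ u, x < u → (s ∩ Ico x u).Nonempty) : x ∈ closure s :=
  mem_closure_of_forall_lt_inter_Ioc_nonempty (α := αᵒᵈ) hx
    fun u hu => let ⟨c, hcs, hxc, hcu⟩ := h u hu; ⟨c, hcs, hcu, hxc⟩

end ClosureOfOrder

namespace DoubleArrow

def fst (a : DoubleArrow) : ℝ := (ofLex a.1).1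

theorem lt_iff (a b : DoubleArrow) :
    a < b ↔ a.fst < b.fst ∨ (a.fst = b.fst ∧ (ofLex a.1).2 < (ofLex b.1).2) :=
  Subtype.coe_lt_coe.symm.trans Prod.Lex.lt_iff

theorem lt_of_fst_lt {a b : DoubleArrow} (h : a.fst < b.fst) : a < b :=
  (lt_iff a b).2 (Or.inl h)

theorem fst_lt_of_lt_of_snd_false {a b : DoubleArrow} (h : a < b) (hb : (ofLex b.1).2 = false) :
    a.fst < b.fst := by
  rcases (lt_iff a b).1 h with h | ⟨-, h⟩
  · exact h
  · rw [hb] at h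
    exact absurd h (not_lt_bot)

theorem fst_lt_of_lt_of_snd_true {a b : DoubleArrow} (h : a < b) (ha : (ofLex a.1).2 = true) :
    a.fst < b.fst := by
  rcases (lt_iff a b).1 h with h | ⟨-, h⟩
  · exact h
  · rw [ha] at h
    exact absurd h (not_top_lt)

theorem exists_mem_ratLowerPoints_fst_mem_Ioo {r s : ℝ} (hrs : r < s) (hr : 0 ≤ r) (hs : s ≤ 1) :
    ∃ c ∈ ratLowerPoints, c.fst ∈ Ioo r s := by
  obtain ⟨q, hrq, hqs⟩ := exists_rat_btwn hrs
  have hq0 : (0 : ℝ) < q := hr.trans_lt hrq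
  have hq1 : (q : ℝ) ≤ 1 := hqs.le.trans hs
  refine ⟨⟨toLex ((q : ℝ), false), Or.inl ⟨rfl, hq0, hq1⟩⟩, ⟨rfl, q, ?_, ?_, rfl⟩, hrq, hqs⟩
  · exact_mod_cast hq0
  · exact_mod_cast hq1

theorem mem_closure_ratLowerPoints_of_snd_false {x : DoubleArrow} (hx : (ofLex x.1).2 = false)
    (hx01 : x.fst ∈ Ioc 0 1) : x ∈ closure ratLowerPoints := by
  have bot : (⟨toLex (0, true), Or.inr ⟨rfl, le_rfl, zero_lt_one⟩⟩ : DoubleArrow) < x :=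
    lt_of_fst_lt hx01.1
  refine mem_closure_of_forall_lt_inter_Ioc_nonempty ⟨_, bot⟩ fun l hl => ?_
  obtain ⟨c, hc, hlc, hcx⟩ := exists_mem_ratLowerPoints_fst_mem_Ioo
    (max_lt (fst_lt_of_lt_of_snd_false hl hx) hx01.1) (le_max_right _ _) hx01.2
  exact ⟨c, hc, lt_of_fst_lt ((le_max_left _ _).trans_lt hlc), (lt_of_fst_lt hcx).le⟩

theorem mem_closure_ratLowerPoints_of_snd_true {x : DoubleArrow} (hx : (ofLex x.1).2 = true)
    (hx01 : x.fst ∈ Ico 0 1) : x ∈ closure ratLowerPoints := by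
  have top : x < (⟨toLex (1, false), Or.inl ⟨rfl, zero_lt_one, le_rfl⟩⟩ : DoubleArrow) :=
    lt_of_fst_lt hx01.2
  refine mem_closure_of_forall_gt_inter_Ico_nonempty ⟨_, top⟩ fun u hu => ?_
  obtain ⟨c, hc, hxc, hcu⟩ := exists_mem_ratLowerPoints_fst_mem_Ioo
    (lt_min (fst_lt_of_lt_of_snd_true hu hx) hx01.2) hx01.1 (min_le_right _ _)
  exact ⟨c, hc, (lt_of_fst_lt hxc).le, lt_of_fst_lt (hcu.trans_le (min_le_left _ _))⟩

theorem dense_ratLowerPoints : Dense ratLowerPoints := fun x =>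
  x.2.elim (fun h => mem_closure_ratLowerPoints_of_snd_false h.1 h.2)
    (fun h => mem_closure_ratLowerPoints_of_snd_true h.1 h.2)

theorem countable_ratLowerPoints : ratLowerPoints.Countable := by
  have hmaps : MapsTo fst ratLowerPoints (range ((↑) : ℚ → ℝ)) := by
    rintro a ⟨-, q, -, -, hq⟩
    exact ⟨q, hq.symm⟩
  refine hmaps.countable_of_injOn ?_ (countable_range _)
  rintro a ⟨ha, -⟩ b ⟨hb, -⟩ h
  exact Subtype.ext (ofLex.injective (Prod.ext h (ha.trans hb.symm)))

end DoubleArrow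

theorem doubleArrow_separable :
    ratLowerPoints.Countable ∧ Dense ratLowerPoints :=
  ⟨DoubleArrow.countable_ratLowerPoints, DoubleArrow.dense_ratLowerPoints⟩
end

section
/- Every compact metrizable subspace of the double arrow space 𝔸 is countable. -/
open Set Topology

/-!
In the double arrow space `(x, 0)` is covered by `(x, 1)`, and `(0, 1)`, `(1, 0)` are the
extreme points, so for every point `p` one of `Ici p`, `Iic p` is open. In a second countable
space with a partial order, sending a point `x` with `Ici x` open to a basic open set `t` with
`x ∈ t ⊆ Ici x` is injective (`x` is the least element of `t`), so such points are countable,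
and dually for `Iic`. Compact metrizable spaces are second countable.
-/

section SecondCountable

variable {X : Type*} [TopologicalSpace X] [PartialOrder X] [SecondCountableTopology X]

theorem Set.countable_setOf_isOpen_Ici : {x : X | IsOpen (Ici x)}.Countable := by
  obtain ⟨b, hbc, -, hb⟩ := TopologicalSpace.exists_countable_basis X
  have : ∀ x : {x : X | IsOpen (Ici x)}, ∃ t ∈ b, (x : X) ∈ t ∧ t ⊆ Ici (x : X) :=
    fun x => hb.exists_subset_of_mem_open self_mem_Ici x.2
  choose t htb hxt hts using this
  have : Countable b := hbc.to_subtype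
  rw [← countable_coe_iff]
  refine Function.Injective.countable (f := fun x => (⟨t x, htb x⟩ : b)) fun x y hxy => ?_
  have htxy : t x = t y := congrArg Subtype.val hxy
  exact Subtype.ext <| le_antisymm (hts x (htxy ▸ hxt y)) (hts y (htxy ▸ hxt x))

theorem Set.countable_setOf_isOpen_Iic : {x : X | IsOpen (Iic x)}.Countable :=
  Set.countable_setOf_isOpen_Ici (X := Xᵒᵈ)

theorem countable_of_forall_isOpen_Ici_or_isOpen_Iic
    (h : ∀ x : X, IsOpen (Ici x) ∨ IsOpen (Iic x)) : Countable X := by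
  rw [← countable_univ_iff]
  exact (countable_setOf_isOpen_Ici.union countable_setOf_isOpen_Iic).mono fun x _ => h x

end SecondCountable

section OrderTopology

variable {α : Type*} [LinearOrder α] [TopologicalSpace α] [OrderTopology α] {a b : α}

theorem CovBy.isOpen_Ici (h : a ⋖ b) : IsOpen (Ici b) :=
  h.Ioi_eq ▸ isOpen_Ioi

theorem CovBy.isOpen_Iic (h : a ⋖ b) : IsOpen (Iic a) :=
  h.Iio_eq ▸ isOpen_Iio

end OrderTopology

namespace DoubleArrow

theorem covBy_of_mem_Ioo {x : ℝ} (hx : x ∈ Ioo 0 1) :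
    (⟨toLex (x, false), Or.inl ⟨rfl, hx.1, hx.2.le⟩⟩ : DoubleArrow) ⋖
      ⟨toLex (x, true), Or.inr ⟨rfl, hx.1.le, hx.2⟩⟩ :=
  CovBy.of_image (OrderEmbedding.subtype _)
    (Prod.Lex.toLex_covBy_toLex_iff.2 (Or.inl ⟨rfl, by simp [CovBy]⟩))

theorem isTop_one :
    IsTop (⟨toLex (1, false), Or.inl ⟨rfl, one_pos, le_rfl⟩⟩ : DoubleArrow) := by
  rintro ⟨⟨y, _ | _⟩, ⟨⟨⟩, hy⟩ | ⟨⟨⟩, hy⟩⟩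
  · exact Prod.Lex.toLex_le_toLex.2 (hy.2.lt_or_eq.imp id fun h => ⟨h, le_rfl⟩)
  · exact Prod.Lex.toLex_le_toLex.2 (Or.inl hy.2)

theorem isBot_zero :
    IsBot (⟨toLex (0, true), Or.inr ⟨rfl, le_rfl, one_pos⟩⟩ : DoubleArrow) := by
  rintro ⟨⟨y, _ | _⟩, ⟨⟨⟩, hy⟩ | ⟨⟨⟩, hy⟩⟩
  · exact Prod.Lex.toLex_le_toLex.2 (Or.inl hy.1)
  · exact Prod.Lex.toLex_le_toLex.2 (hy.1.lt_or_eq.imp id fun h => ⟨h, le_rfl⟩)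

theorem isOpen_Ici_or_isOpen_Iic (p : DoubleArrow) : IsOpen (Ici p) ∨ IsOpen (Iic p) := by
  obtain ⟨⟨x, _ | _⟩, ⟨⟨⟩, hx⟩ | ⟨⟨⟩, hx⟩⟩ := p
  · right
    rcases hx.2.lt_or_eq with hx1 | rfl
    · exact CovBy.isOpen_Iic (α := DoubleArrow) (covBy_of_mem_Ioo ⟨hx.1, hx1⟩)
    · exact isTop_one.Iic_eq ▸ isOpen_univ
  · left
    rcases hx.1.lt_or_eq with hx0 | rfl
    · exact CovBy.isOpen_Ici (α := DoubleArrow) (covBy_of_mem_Ioo ⟨hx0, hx.2⟩)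
    · exact isBot_zero.Ici_eq ▸ isOpen_univ

end DoubleArrow

theorem compact_metrizable_subset_doubleArrow_countable :
    ∀ S : Set DoubleArrow, IsCompact S →
      TopologicalSpace.MetrizableSpace S → S.Countable := by
  intro S hS _
  have : CompactSpace S := isCompact_iff_compactSpace.mp hS
  let _ := TopologicalSpace.metrizableSpaceMetric S
  rw [← countable_coe_iff]
  exact countable_of_forall_isOpen_Ici_or_isOpen_Iic fun p =>
    (DoubleArrow.isOpen_Ici_or_isOpen_Iic p.1).imp
      (·.preimage continuous_subtype_val) (·.preimage continuous_subtype_val)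
end

section
/- The double arrow space 𝔸 contains no subspace homeomorphic to the Cantor set 2^ω. -/
open Set Topology

/-!
Every point of the double arrow is isolated on one side: `(x, 0) ⋖ (x, 1)` for `0 < x < 1`, and
the two endpoints are the top and bottom. So each point `p` of a subspace has a basic open set
contained in `Ici p` or in `Iic p`; two points sharing such a set on the same side are equal. Hence
a second-countable subspace of the double arrow is countable, while `2^ω` is second-countable and
uncountable.
-/

theorem countable_setOf_Ici_mem_nhds {X : Type*} [TopologicalSpace X]
    [SecondCountableTopology X] [PartialOrder X] : {x : X | Ici x ∈ 𝓝 x}.Countable := by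
  choose! t htB hxt htx using fun x (hx : Ici x ∈ 𝓝 x) =>
    (TopologicalSpace.isBasis_countableBasis X).mem_nhds_iff.1 hx
  refine MapsTo.countable_of_injOn htB (fun x hx y hy hxy => le_antisymm ?_ ?_)
    (TopologicalSpace.countable_countableBasis X)
  · exact htx x hx (hxy ▸ hxt y hy)
  · exact htx y hy (hxy ▸ hxt x hx)

theorem countable_of_forall_Ici_mem_nhds_or_Iic_mem_nhds {X : Type*} [TopologicalSpace X]
    [SecondCountableTopology X] [PartialOrder X] (h : ∀ x : X, Ici x ∈ 𝓝 x ∨ Iic x ∈ 𝓝 x) :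
    Countable X := by
  rw [← Set.countable_univ_iff]
  have hIic : {x : X | Iic x ∈ 𝓝 x}.Countable := countable_setOf_Ici_mem_nhds (X := Xᵒᵈ)
  exact (countable_setOf_Ici_mem_nhds.union hIic).mono fun x _ => h x

theorem Iic_mem_nhds_of_nhdsGT_eq_bot {α : Type*} [TopologicalSpace α] [LinearOrder α]
    {a : α} (h : 𝓝[>] a = ⊥) : Iic a ∈ 𝓝 a := by
  rw [← nhdsLE_sup_nhdsGT, h, sup_bot_eq]
  exact self_mem_nhdsWithin

theorem Ici_mem_nhds_of_nhdsLT_eq_bot {α : Type*} [TopologicalSpace α] [LinearOrder α]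
    {a : α} (h : 𝓝[<] a = ⊥) : Ici a ∈ 𝓝 a :=
  Iic_mem_nhds_of_nhdsGT_eq_bot (α := αᵒᵈ) h

theorem not_countable_cantorSpace : ¬ Countable (ℕ → Bool) := by
  rw [← not_uncountable_iff, not_not, ← Cardinal.aleph0_lt_mk_iff]
  simpa using Cardinal.cantor Cardinal.aleph0

namespace DoubleArrow

theorem covBy {x : ℝ} (h0 : 0 < x) (h1 : x < 1) :
    (⟨toLex (x, false), Or.inl ⟨rfl, h0, h1.le⟩⟩ : DoubleArrow) ⋖
      ⟨toLex (x, true), Or.inr ⟨rfl, h0.le, h1⟩⟩ :=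
  CovBy.of_image (OrderEmbedding.subtype _) <|
    Prod.Lex.toLex_covBy_toLex_iff.2 <| Or.inl ⟨rfl, Bool.covBy_iff.2 rfl⟩

theorem nhdsLT_eq_bot_or_nhdsGT_eq_bot (p : DoubleArrow) : 𝓝[<] p = ⊥ ∨ 𝓝[>] p = ⊥ := by
  rw [nhdsLT_eq_bot_iff, nhdsGT_eq_bot_iff]
  obtain ⟨p, hp⟩ := p
  obtain ⟨⟨x, b⟩, rfl⟩ := toLex.surjective p
  cases b with
  | false =>
    obtain ⟨h0, h1⟩ : x ∈ Ioc 0 1 := by simpa using hp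
    rcases h1.eq_or_lt with rfl | h1
    · exact Or.inr (Or.inl isTop_one)
    · exact Or.inr (Or.inr ⟨_, covBy h0 h1⟩)
  | true =>
    obtain ⟨h0, h1⟩ : x ∈ Ico 0 1 := by simpa using hp
    rcases h0.eq_or_lt with rfl | h0
    · exact Or.inl (Or.inl isBot_zero)
    · exact Or.inl (Or.inr ⟨_, covBy h0 h1⟩)

theorem Ici_mem_nhds_or_Iic_mem_nhds (p : DoubleArrow) : Ici p ∈ 𝓝 p ∨ Iic p ∈ 𝓝 p :=
  (nhdsLT_eq_bot_or_nhdsGT_eq_bot p).imp Ici_mem_nhds_of_nhdsLT_eq_bot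
    Iic_mem_nhds_of_nhdsGT_eq_bot

end DoubleArrow

theorem doubleArrow_no_cantor_subspace :
    ∀ S : Set DoubleArrow, ¬ Nonempty ((ℕ → Bool) ≃ₜ S) := by
  rintro S ⟨e⟩
  have := e.symm.secondCountableTopology
  have : Countable S := countable_of_forall_Ici_mem_nhds_or_Iic_mem_nhds fun p =>
    (DoubleArrow.Ici_mem_nhds_or_Iic_mem_nhds p).imp
      continuousAt_subtype_val.preimage_mem_nhds continuousAt_subtype_val.preimage_mem_nhds
  exact not_countable_cantorSpace e.injective.countable
end

section
/- The countable power ℚ^ω of the rationals is not countable dense homogeneous. -/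
open Set Topology

/-- Countable dense homogeneity. -/
def CDH (X : Type*) [TopologicalSpace X] : Prop :=
  ∀ D E : Set X, D.Countable → Dense D → E.Countable → Dense E →
    ∃ h : X ≃ₜ X, h '' D = E

/-!
`ℚ^ω` is meagre in itself (it is covered by the closed nowhere dense sets `{x | x 0 = q}`), yet it
contains a Cantor set `K`. Take a countable dense set `E` meeting each member of a countable closed
nowhere dense cover of the space in a finite set, and a countable dense set `D` containing a countable
dense subset of `K`. A homeomorphism carrying `D` onto `E` would pull the cover back to a countable
closed cover of `K`; by the Baire category theorem one of its members has interior in `K`, so it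
contains infinitely many points of `D`, while its image contains only finitely many points of `E`.
-/

open Filter TopologicalSpace Function

section Meagre

variable {X : Type*} [TopologicalSpace X]

lemma IsNowhereDense.union {s t : Set X} (hs : IsNowhereDense s) (ht : IsNowhereDense t) :
    IsNowhereDense (s ∪ t) := by
  obtain ⟨hs_open, hs_dense⟩ :=
    isClosed_isNowhereDense_iff_compl.mp ⟨isClosed_closure, hs.closure⟩
  obtain ⟨ht_open, ht_dense⟩ :=
    isClosed_isNowhereDense_iff_compl.mp ⟨isClosed_closure, ht.closure⟩
  have : IsNowhereDense (closure s ∪ closure t) := by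
    refine (isClosed_isNowhereDense_iff_compl.mpr ?_).2
    rw [compl_union]
    exact ⟨hs_open.inter ht_open, hs_dense.inter_of_isOpen_left ht_dense hs_open⟩
  exact this.mono (union_subset_union subset_closure subset_closure)

lemma IsNowhereDense.accumulate {s : ℕ → Set X} (hs : ∀ n, IsNowhereDense (s n)) (n : ℕ) :
    IsNowhereDense (accumulate s n) := by
  induction n with
  | zero => simpa using hs 0
  | succ n ih => simpa using ih.union (hs (n + 1))

lemma IsMeagre.exists_seq_isClosed_isNowhereDense {s : Set X} (hs : IsMeagre s) :
    ∃ N : ℕ → Set X, (∀ n, IsClosed (N n) ∧ IsNowhereDense (N n)) ∧ s ⊆ ⋃ n, N n := by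
  obtain ⟨S, hS, hSc, hsS⟩ := isMeagre_iff_countable_union_isNowhereDense.mp hs
  -- `∅` is thrown in so that the family is nonempty and can be enumerated.
  obtain ⟨N, hN⟩ := ((hSc.image closure).insert ∅).exists_eq_range (insert_nonempty _ _)
  refine ⟨N, fun n => ?_, fun x hx => ?_⟩
  · rcases (hN ▸ mem_range_self n : N n ∈ insert ∅ (closure '' S)) with h | ⟨t, ht, h⟩
    · simp [h]
    · exact h ▸ ⟨isClosed_closure, (hS t ht).closure⟩
  · obtain ⟨t, ht, hxt⟩ := hsS hx
    obtain ⟨n, hn⟩ : closure t ∈ range N := hN ▸ mem_insert_of_mem _ (mem_image_of_mem _ ht)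
    exact mem_iUnion.mpr ⟨n, hn ▸ subset_closure hxt⟩

lemma Set.Countable.isMeagre [T1Space X] [∀ x : X, (𝓝[≠] x).NeBot] {s : Set X}
    (hs : s.Countable) : IsMeagre s := by
  rw [← biUnion_of_singleton s]
  exact isMeagre_biUnion hs fun x _ =>
    (isClosed_singleton.isNowhereDense_iff.mpr (interior_singleton x)).isMeagre

/-- Points of `E` are picked one in each basic open set `B`, avoiding the first `index B` sets
`N n`; so each `N n` contains only the points coming from the finitely many `B` of index `< n`. -/
theorem exists_countable_dense_forall_finite_inter [SecondCountableTopology X] {N : ℕ → Set X}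
    (hN : ∀ n, IsNowhereDense (N n)) :
    ∃ E : Set X, E.Countable ∧ Dense E ∧ ∀ n, (E ∩ N n).Finite := by
  obtain ⟨b, hbc, hb_empty, hb⟩ := exists_countable_basis X
  have := hbc.to_subtype
  obtain ⟨index, hindex⟩ := Countable.exists_injective_nat b
  have hpick : ∀ B : b, ∃ e ∈ (B : Set X), e ∈ (closure (accumulate N (index B)))ᶜ := by
    intro ⟨B, hB⟩
    refine (interior_eq_empty_iff_dense_compl.mp (IsNowhereDense.accumulate hN _))
      |>.inter_open_nonempty B (hb.isOpen hB) (nonempty_iff_ne_empty.mpr ?_)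
    exact fun h => hb_empty (h ▸ hB)
  choose e he_mem he_avoid using hpick
  refine ⟨range e, countable_range e, hb.dense_iff.mpr fun B hB _ => ⟨_, he_mem ⟨B, hB⟩,
    mem_range_self _⟩, fun n => ?_⟩
  refine (((finite_Iio n).preimage hindex.injOn).image e).subset ?_
  rintro _ ⟨⟨B, rfl⟩, hBn⟩
  refine mem_image_of_mem e (show index B < n from
    lt_of_not_ge fun hle => he_avoid B (subset_closure ?_))
  exact monotone_accumulate hle (subset_accumulate hBn)

lemma Dense.infinite_inter_of_isOpen [T1Space X] [∀ x : X, (𝓝[≠] x).NeBot] {D U : Set X}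
    (hD : Dense D) (hU : IsOpen U) (hne : U.Nonempty) : (U ∩ D).Infinite := fun hfin => by
  obtain ⟨x, hxU, hxD, hx⟩ := (hD.sdiff_finite hfin).inter_open_nonempty U hU hne
  exact hx ⟨hxU, hxD⟩

end Meagre

instance Pi.nhdsNE_neBot {ι : Type*} [Infinite ι] {π : ι → Type*} [∀ i, TopologicalSpace (π i)]
    [∀ i, Nontrivial (π i)] (x : ∀ i, π i) : (𝓝[≠] x).NeBot := by
  classical
  refine forall_mem_nonempty_iff_neBot.mp fun s hs => ?_
  obtain ⟨u, hu_open, hxu, hus⟩ := mem_nhdsWithin.mp hs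
  obtain ⟨I, t, hIt, hIu⟩ := isOpen_pi_iff.mp hu_open x hxu
  obtain ⟨j, hj⟩ := Infinite.exists_notMem_finset I
  obtain ⟨z, hz⟩ := exists_ne (x j)
  refine ⟨update x j z, hus ⟨hIu fun i hi => ?_, fun h => hz (h ▸ update_self j z x).symm⟩⟩
  rw [update_of_ne (ne_of_mem_of_not_mem hi hj)]
  exact (hIt i hi).2

section CDH

variable {X : Type*} [TopologicalSpace X]

theorem CDH.exists_homeomorph_forall_finite_inter_preimage [SecondCountableTopology X]
    (hX : CDH X) {N : ℕ → Set X} (hN : ∀ n, IsNowhereDense (N n)) {D : Set X}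
    (hDc : D.Countable) (hDd : Dense D) :
    ∃ h : X ≃ₜ X, ∀ n, (D ∩ h ⁻¹' N n).Finite := by
  obtain ⟨E, hEc, hEd, hEfin⟩ := exists_countable_dense_forall_finite_inter hN
  obtain ⟨h, hDE⟩ := hX D E hDc hDd hEc hEd
  refine ⟨h, fun n => ((hEfin n).preimage h.injective.injOn).subset ?_⟩
  exact fun x ⟨hxD, hxN⟩ => ⟨hDE ▸ mem_image_of_mem h hxD, hxN⟩

theorem exists_infinite_image_inter_of_iUnion_eq_univ {C : Type*} [TopologicalSpace C]
    [BaireSpace C] [T1Space C] [Nonempty C] [∀ c : C, (𝓝[≠] c).NeBot] {φ : C → X}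
    (hφ : Continuous φ) (hφ_inj : Injective φ) {D : Set C} (hD : Dense D) {M : ℕ → Set X}
    (hM : ∀ n, IsClosed (M n)) (hcover : ⋃ n, M n = univ) : ∃ n, (φ '' D ∩ M n).Infinite := by
  obtain ⟨n, hn⟩ := nonempty_interior_of_iUnion_of_closed (fun n => (hM n).preimage hφ)
    (by rw [← preimage_iUnion, hcover, preimage_univ])
  refine ⟨n, ((hD.infinite_inter_of_isOpen isOpen_interior hn).image hφ_inj.injOn).mono ?_⟩
  rintro _ ⟨c, ⟨hcM, hcD⟩, rfl⟩
  exact ⟨mem_image_of_mem φ hcD, (interior_subset hcM : c ∈ φ ⁻¹' M n)⟩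

theorem not_CDH_of_isMeagre_univ [SecondCountableTopology X] {C : Type*} [TopologicalSpace C]
    [BaireSpace C] [SeparableSpace C] [T1Space C] [Nonempty C] [∀ c : C, (𝓝[≠] c).NeBot]
    (hX : IsMeagre (univ : Set X)) {φ : C → X} (hφ : Continuous φ) (hφ_inj : Injective φ) :
    ¬ CDH X := by
  intro hCDH
  obtain ⟨N, hN, hcover⟩ := hX.exists_seq_isClosed_isNowhereDense
  obtain ⟨D₀, hD₀c, hD₀d⟩ := exists_countable_dense X
  obtain ⟨D₁, hD₁c, hD₁d⟩ := exists_countable_dense C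
  obtain ⟨h, hfin⟩ := hCDH.exists_homeomorph_forall_finite_inter_preimage (fun n => (hN n).2)
    (hD₀c.union (hD₁c.image φ)) (hD₀d.mono subset_union_left)
  obtain ⟨n, hn⟩ := exists_infinite_image_inter_of_iUnion_eq_univ hφ hφ_inj hD₁d
    (M := fun n => h ⁻¹' N n) (fun n => (hN n).1.preimage h.continuous)
    (by rw [← preimage_iUnion, univ_subset_iff.mp hcover, preimage_univ])
  exact hn ((hfin n).subset (inter_subset_inter_left _ subset_union_right))

end CDH

theorem rationals_power_not_CDH : ¬ CDH (ℕ → ℚ) := by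
  have hmeagre : IsMeagre (univ : Set (ℕ → ℚ)) :=
    countable_univ.isMeagre.preimage_of_isOpenMap (continuous_apply 0) (isOpenMap_eval 0)
  let bit : Bool → ℚ := fun a => if a then 1 else 0
  have hbit : Injective bit := by
    intro a b
    cases a <;> cases b <;> simp [bit]
  exact not_CDH_of_isMeagre_univ hmeagre (φ := (bit ∘ ·))
    (continuous_pi fun i => continuous_of_discreteTopology.comp (continuous_apply i))
    hbit.comp_left
end

section
/- The Sorgenfrey line 𝕊 is countable dense homogeneous: for any two countable dense subsets D, E of 𝕊 there is a homeomorphism h : 𝕊 → 𝕊 with h[D] = E. -/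
open Set Topology

/-- The Sorgenfrey line: ℝ with the topology generated by half-open intervals [a,b). -/
def SorgenfreyLine : Type := ℝ

instance : TopologicalSpace SorgenfreyLine :=
  TopologicalSpace.generateFrom {s : Set ℝ | ∃ a b : ℝ, s = Set.Ico a b}

/-!
A dense subset of the Sorgenfrey line is dense in `ℝ`, so a countable one is a countable dense
linear order without endpoints. By Cantor's back-and-forth theorem any two such sets are order
isomorphic, and an order isomorphism between dense subsets of `ℝ` extends, by taking suprema, to an
order automorphism of `ℝ`. Order automorphisms of `ℝ` carry half-open intervals `[a, b)` to
half-open intervals, so they are homeomorphisms of the Sorgenfrey line.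
-/

section DenseSubset

variable {α : Type*} [LinearOrder α] [TopologicalSpace α] [OrderTopology α] {s : Set α}

lemma Dense.eq_of_forall_lt_imp_le_of_forall_gt_imp_ge [DenselyOrdered α] (hs : Dense s)
    {y y' : α} (hlt : ∀ e ∈ s, e < y → e ≤ y') (hgt : ∀ e ∈ s, y < e → y' ≤ e) : y' = y := by
  refine le_antisymm (le_of_not_gt fun hy => ?_) (le_of_not_gt fun hy => ?_)
  · obtain ⟨e, he, hye, hey'⟩ := hs.exists_between hy
    exact (hgt e he hye).not_gt hey'
  · obtain ⟨e, he, hy'e, hey⟩ := hs.exists_between hy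
    exact (hlt e he hey).not_gt hy'e

lemma Dense.denselyOrdered_subtype [DenselyOrdered α] (hs : Dense s) : DenselyOrdered s :=
  ⟨fun a b hab => by
    obtain ⟨c, hc, hac, hcb⟩ := hs.exists_between (Subtype.coe_lt_coe.mpr hab)
    exact ⟨⟨c, hc⟩, hac, hcb⟩⟩

lemma Dense.noMaxOrder_subtype [NoMaxOrder α] (hs : Dense s) : NoMaxOrder s :=
  ⟨fun a => by
    obtain ⟨c, hc, hac⟩ := hs.exists_gt (a : α)
    exact ⟨⟨c, hc⟩, hac⟩⟩

lemma Dense.noMinOrder_subtype [NoMinOrder α] (hs : Dense s) : NoMinOrder s :=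
  ⟨fun a => by
    obtain ⟨c, hc, hca⟩ := hs.exists_lt (a : α)
    exact ⟨⟨c, hc⟩, hca⟩⟩

end DenseSubset

namespace OrderIso

variable {α β : Type*} {D : Set α} {E : Set β}

noncomputable def extendDense [LinearOrder α] [ConditionallyCompleteLinearOrder β] (f : D ≃o E)
    (x : α) : β :=
  sSup ((fun d : D => (f d : β)) '' {d | (d : α) < x})

variable [TopologicalSpace α]

section LinearOrder

variable [LinearOrder α] [OrderTopology α] [ConditionallyCompleteLinearOrder β]

lemma le_extendDense [NoMaxOrder α] (hD : Dense D) (f : D ≃o E) {d : D} {x : α}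
    (h : (d : α) < x) : (f d : β) ≤ f.extendDense x := by
  obtain ⟨d', hd', hxd'⟩ := hD.exists_gt x
  refine le_csSup ⟨f ⟨d', hd'⟩, ?_⟩ ⟨d, h, rfl⟩
  rintro _ ⟨c, hc, rfl⟩
  exact f.monotone (Subtype.coe_le_coe.mp (hc.trans hxd').le)

lemma extendDense_le [NoMinOrder α] (hD : Dense D) (f : D ≃o E) {x : α} {d : D}
    (h : x ≤ (d : α)) : f.extendDense x ≤ f d := by
  obtain ⟨d', hd', hd'x⟩ := hD.exists_lt x
  refine csSup_le ⟨f ⟨d', hd'⟩, ⟨d', hd'⟩, hd'x, rfl⟩ ?_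
  rintro _ ⟨c, hc, rfl⟩
  exact f.monotone (Subtype.coe_le_coe.mp (hc.trans_le h).le)

lemma extendDense_strictMono [DenselyOrdered α] [NoMinOrder α] [NoMaxOrder α] (hD : Dense D)
    (f : D ≃o E) : StrictMono f.extendDense := by
  intro x y hxy
  obtain ⟨d₁, hd₁, hxd₁, hd₁y⟩ := hD.exists_between hxy
  obtain ⟨d₂, hd₂, hd₁d₂, hd₂y⟩ := hD.exists_between hd₁y
  calc f.extendDense x ≤ f ⟨d₁, hd₁⟩ := f.extendDense_le hD hxd₁.le
    _ < f ⟨d₂, hd₂⟩ := Subtype.coe_lt_coe.mpr (f.strictMono (Subtype.mk_lt_mk.mpr hd₁d₂))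
    _ ≤ f.extendDense y := f.le_extendDense hD hd₂y

lemma extendDense_coe [NoMinOrder α] [NoMaxOrder α] [TopologicalSpace β] [OrderTopology β]
    [DenselyOrdered β] (hD : Dense D) (hE : Dense E) (f : D ≃o E) (d : D) :
    f.extendDense d = f d := by
  refine hE.eq_of_forall_lt_imp_le_of_forall_gt_imp_ge (fun e he hed => ?_)
    (fun e _ hde => (f.extendDense_le hD le_rfl).trans hde.le)
  have hlt : f.symm ⟨e, he⟩ < d := by
    simpa using f.symm.strictMono (Subtype.mk_lt_mk.mpr hed : (⟨e, he⟩ : E) < f d)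
  simpa using f.le_extendDense hD (Subtype.coe_lt_coe.mpr hlt)

end LinearOrder

variable [ConditionallyCompleteLinearOrder α] [OrderTopology α]
  [DenselyOrdered α] [NoMinOrder α] [NoMaxOrder α]
  [ConditionallyCompleteLinearOrder β] [TopologicalSpace β] [OrderTopology β]
  [DenselyOrdered β] [NoMinOrder β] [NoMaxOrder β]

lemma extendDense_extendDense_symm (hD : Dense D) (hE : Dense E) (f : D ≃o E) (y : β) :
    f.extendDense (f.symm.extendDense y) = y := by
  have hcoe (e : E) : f.extendDense (f.symm e) = e := by
    simpa using f.extendDense_coe hD hE (f.symm e)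
  have hmono := (f.extendDense_strictMono hD).monotone
  refine hE.eq_of_forall_lt_imp_le_of_forall_gt_imp_ge (fun e he hey => ?_) (fun e he hye => ?_)
  · simpa [hcoe] using hmono (f.symm.le_extendDense hE (d := ⟨e, he⟩) hey)
  · simpa [hcoe] using hmono (f.symm.extendDense_le hE (d := ⟨e, he⟩) hye.le)

lemma exists_extension_of_dense (hD : Dense D) (hE : Dense E) (f : D ≃o E) :
    ∃ g : α ≃o β, ∀ d : D, g d = f d := by
  have hsurj : Function.Surjective f.extendDense := fun y =>
    ⟨_, f.extendDense_extendDense_symm hD hE y⟩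
  exact ⟨StrictMono.orderIsoOfSurjective _ (f.extendDense_strictMono hD) hsurj,
    f.extendDense_coe hD hE⟩

end OrderIso

theorem exists_orderIso_image_eq_of_countable_dense {α : Type*}
    [ConditionallyCompleteLinearOrder α] [TopologicalSpace α] [OrderTopology α]
    [DenselyOrdered α] [NoMinOrder α] [NoMaxOrder α] [Nonempty α] {D E : Set α}
    (hDc : D.Countable) (hD : Dense D) (hEc : E.Countable) (hE : Dense E) :
    ∃ g : α ≃o α, g '' D = E := by
  have := hDc.to_subtype; have := hEc.to_subtype
  have := hD.nonempty.to_subtype; have := hE.nonempty.to_subtype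
  have := hD.denselyOrdered_subtype; have := hD.noMinOrder_subtype; have := hD.noMaxOrder_subtype
  have := hE.denselyOrdered_subtype; have := hE.noMinOrder_subtype
  have := hE.noMaxOrder_subtype
  obtain ⟨f⟩ := Order.iso_of_countable_dense D E
  obtain ⟨g, hg⟩ := f.exists_extension_of_dense hD hE
  refine ⟨g, ?_⟩
  rw [← Subtype.range_coe (s := D), ← range_comp, ← Subtype.range_coe (s := E)]
  simpa [Function.comp_def, hg] using f.surjective.range_comp Subtype.val

namespace SorgenfreyLine

lemma isOpen_Ico (a b : ℝ) : IsOpen (X := SorgenfreyLine) (Ico a b : Set ℝ) :=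
  TopologicalSpace.isOpen_generateFrom_of_mem ⟨a, b, rfl⟩

lemma dense_real_of_dense {s : Set ℝ} (hs : Dense (X := SorgenfreyLine) s) : Dense s := by
  refine dense_iff_exists_between.mpr fun a b hab => ?_
  obtain ⟨c, hac, hcb⟩ := exists_between hab
  obtain ⟨d, hds, hcd, hdb⟩ := hs.exists_mem_open (isOpen_Ico c b) ⟨c, le_rfl, hcb⟩
  exact ⟨d, hds, hac.trans_le hcd, hdb⟩

lemma continuous_orderIso (g : ℝ ≃o ℝ) :
    Continuous (X := SorgenfreyLine) (Y := SorgenfreyLine) g := by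
  refine continuous_generateFrom_iff.mpr ?_
  rintro _ ⟨a, b, rfl⟩
  have h := isOpen_Ico (g.symm a) (g.symm b)
  rwa [← g.preimage_Ico] at h

def homeomorphOfOrderIso (g : ℝ ≃o ℝ) : SorgenfreyLine ≃ₜ SorgenfreyLine :=
  ⟨g.toEquiv, continuous_orderIso g, continuous_orderIso g.symm⟩

end SorgenfreyLine

theorem sorgenfrey_CDH : CDH SorgenfreyLine := by
  intro D E hDc hD hEc hE
  obtain ⟨g, hg⟩ := exists_orderIso_image_eq_of_countable_dense (α := ℝ) hDc
    (SorgenfreyLine.dense_real_of_dense hD) hEc (SorgenfreyLine.dense_real_of_dense hE)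
  exact ⟨SorgenfreyLine.homeomorphOfOrderIso g, hg⟩
end

section
/- The countable power 𝕊^ω of the Sorgenfrey line is not countable dense homogeneous. -/
open Set Topology

/-!
Take a countable dense set `D ⊆ 𝕊^ω` on which the first coordinate is injective (the coordinates
of its `l`-th point lie in `ℚ + l√2`), and a countable crowded set `A` in the compact cube
`{a, b}^ω`. A homeomorphism `h` with `h '' D = D ∪ A` would make `h⁻¹ '' A` a crowded subset of `D`
inside a compact set, injectively mapped into `𝕊` by the first coordinate `f`. Crowdedness gives,
for every point `x`, another point in the neighbourhood `f⁻¹ [f x, f x + 1)`, so the image has no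
largest element; but in `𝕊` every nonempty subset of a compact set has one, since at a cluster
point `y` of an increasing sequence `u` the neighbourhood `[y, u (n + 1))` misses all later terms.
-/

open Filter

section CantorCube

variable {Y : Type*} (a b : Y)

def finsetIndicator (s : Finset ℕ) : ℕ → Y := fun k => if k ∈ s then b else a

theorem range_finsetIndicator_subset : range (finsetIndicator a b) ⊆ univ.pi fun _ => {a, b} := by
  rintro _ ⟨s, rfl⟩ k -
  by_cases hk : k ∈ s <;> simp [finsetIndicator, hk]

theorem preperfect_range_finsetIndicator [TopologicalSpace Y] (hab : a ≠ b) :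
    Preperfect (range (finsetIndicator a b)) := by
  rintro _ ⟨s, rfl⟩
  have hlim : Tendsto (fun n => finsetIndicator a b (insert n s)) atTop
      (𝓝 (finsetIndicator a b s)) := by
    refine tendsto_pi_nhds.2 fun k => tendsto_const_nhds.congr' ?_
    filter_upwards [eventually_gt_atTop k] with n hn
    simp [finsetIndicator, hn.ne]
  refine accPt_iff_frequently.2 (hlim.frequently (Eventually.frequently ?_))
  filter_upwards [Nat.cofinite_eq_atTop ▸ s.finite_toSet.eventually_cofinite_notMem] with n hn
  refine ⟨fun h => ?_, mem_range_self _⟩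
  have := congrFun h n
  simp_all [finsetIndicator]

end CantorCube

namespace SorgenfreyLine

noncomputable instance : Field SorgenfreyLine := inferInstanceAs (Field ℝ)
noncomputable instance : LinearOrder SorgenfreyLine := inferInstanceAs (LinearOrder ℝ)
instance : IsStrictOrderedRing SorgenfreyLine := inferInstanceAs (IsStrictOrderedRing ℝ)
instance : Archimedean SorgenfreyLine := inferInstanceAs (Archimedean ℝ)

theorem isTopologicalBasis_Ico :
    TopologicalSpace.IsTopologicalBasis {s : Set SorgenfreyLine | ∃ a b, s = Ico a b} where
  exists_subset_inter := by
    rintro _ ⟨a, b, rfl⟩ _ ⟨c, d, rfl⟩ x hx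
    exact ⟨Ico (max a c) (min b d), ⟨_, _, rfl⟩, by simp_all, (Ico_inter_Ico).ge⟩
  sUnion_eq := sUnion_eq_univ_iff.2 fun x => ⟨Ico x (x + 1), ⟨_, _, rfl⟩, by simp⟩
  eq_generateFrom := rfl

theorem nhds_basis_Ico (x : SorgenfreyLine) : (𝓝 x).HasBasis (x < ·) (Ico x) := by
  refine ⟨fun s => isTopologicalBasis_Ico.mem_nhds_iff.trans ⟨?_, ?_⟩⟩
  · rintro ⟨_, ⟨a, b, rfl⟩, hx, hs⟩
    exact ⟨b, hx.2, (Ico_subset_Ico_left hx.1).trans hs⟩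
  · rintro ⟨b, hb, hs⟩
    exact ⟨_, ⟨x, b, rfl⟩, ⟨le_rfl, hb⟩, hs⟩

theorem wellFoundedOn_gt_of_isCompact {C : Set SorgenfreyLine} (hC : IsCompact C) :
    C.WellFoundedOn (· > ·) := by
  refine wellFoundedOn_iff_no_descending_seq.2 fun u huC => ?_
  have hu : StrictMono u := fun m n h => u.map_rel_iff.2 h
  obtain ⟨y, -, hy⟩ := hC.exists_mapClusterPt (f := atTop) (tendsto_principal.2 (.of_forall huC))
  have hIco {b} (hb : y < b) : ∃ᶠ n in atTop, u n ∈ Ico y b :=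
    hy.frequently ((nhds_basis_Ico y).mem_of_mem hb)
  obtain ⟨n, -, hn⟩ := (hIco (lt_add_one y)).forall_exists_of_atTop 0
  obtain ⟨m, hm, hmn⟩ := (hIco (hn.1.trans_lt (hu n.lt_succ_self))).forall_exists_of_atTop (n + 1)
  exact hmn.2.not_ge (hu.monotone hm)

section Preperfect

variable {X : Type*} [TopologicalSpace X] {A : Set X} {f : X → SorgenfreyLine}

theorem exists_lt_of_preperfect (hA : Preperfect A) (hf : Continuous f)
    (hinj : InjOn f A) {x : X} (hx : x ∈ A) : ∃ y ∈ A, f x < f y := by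
  have hU : f ⁻¹' Ico (f x) (f x + 1) ∈ 𝓝 x :=
    hf.continuousAt.preimage_mem_nhds ((nhds_basis_Ico _).mem_of_mem (lt_add_one _))
  obtain ⟨y, ⟨hyU, hyA⟩, hyx⟩ := preperfect_iff_nhds.1 hA x hx _ hU
  exact ⟨y, hyA, hyU.1.lt_of_ne fun h => hyx (hinj hyA hx h.symm)⟩

theorem not_injOn_of_preperfect {K : Set X} (hK : IsCompact K) (hAK : A ⊆ K)
    (hA : Preperfect A) (hne : A.Nonempty) (hf : Continuous f) : ¬ InjOn f A := by
  intro hinj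
  obtain ⟨_, ⟨x, hx, rfl⟩, hmax⟩ := ((wellFoundedOn_gt_of_isCompact (hK.image hf)).subset
    (image_mono hAK)).exists_maximal (hne.image f)
  obtain ⟨y, hy, hlt⟩ := exists_lt_of_preperfect hA hf hinj hx
  exact hlt.not_ge (hmax ⟨y, hy, rfl⟩ hlt.le)

end Preperfect

def ratBox (l : List (ℚ × ℚ)) : Set (ℕ → SorgenfreyLine) :=
  {x | ∀ k p, l[k]? = some p → x k ∈ Ico (p.1 : SorgenfreyLine) p.2}

theorem exists_ratBox_subset_of_isOpen {U : Set (ℕ → SorgenfreyLine)} (hU : IsOpen U)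
    {x : ℕ → SorgenfreyLine} (hx : x ∈ U) :
    ∃ l : List (ℚ × ℚ), (∀ p ∈ l, p.1 < p.2) ∧ ratBox l ⊆ U := by
  obtain ⟨I, u, hu, hIU⟩ := isOpen_pi_iff.1 hU x hx
  have : ∀ k, ∃ p : ℚ × ℚ, p.1 < p.2 ∧ (k ∈ I → Ico (p.1 : SorgenfreyLine) p.2 ⊆ u k) := by
    intro k
    by_cases hk : k ∈ I
    · obtain ⟨c, hxc, hc⟩ := (nhds_basis_Ico (x k)).mem_iff.1 ((hu k hk).1.mem_nhds (hu k hk).2)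
      obtain ⟨a, hxa, hac⟩ := exists_rat_btwn hxc
      obtain ⟨b, hab, hbc⟩ := exists_rat_btwn hac
      exact ⟨(a, b), by exact_mod_cast hab, fun _ => (Ico_subset_Ico hxa.le hbc.le).trans hc⟩
    · exact ⟨(0, 1), zero_lt_one, fun h => (hk h).elim⟩
  choose p hp hpu using this
  refine ⟨(List.range (I.sup id + 1)).map p, by simp [hp],
    fun y hy => hIU fun k hk => hpu k hk (hy k (p k) ?_)⟩
  have hkN : k < I.sup id + 1 := Nat.lt_add_one_of_le (I.le_sup (f := id) hk)
  simp [hkN]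

open Classical in
noncomputable def shiftedRatPoint (t : ℝ) (l : List (ℚ × ℚ)) (k : ℕ) : ℝ :=
  if h : ∃ q : ℚ, ∃ p ∈ l[k]?, (q : ℝ) + t ∈ Ico (p.1 : ℝ) p.2 then (h.choose : ℝ) + t else t

theorem exists_shiftedRatPoint_eq (t : ℝ) (l : List (ℚ × ℚ)) (k : ℕ) :
    ∃ q : ℚ, shiftedRatPoint t l k = q + t := by
  unfold shiftedRatPoint
  split_ifs with h
  · exact ⟨_, rfl⟩
  · exact ⟨0, by simp⟩

theorem shiftedRatPoint_mem_Ico (t : ℝ) {l : List (ℚ × ℚ)} {k : ℕ} {p : ℚ × ℚ}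
    (hk : l[k]? = some p) (hp : p.1 < p.2) : shiftedRatPoint t l k ∈ Ico (p.1 : ℝ) p.2 := by
  have h : ∃ q : ℚ, ∃ p ∈ l[k]?, (q : ℝ) + t ∈ Ico (p.1 : ℝ) p.2 := by
    obtain ⟨q, hq₁, hq₂⟩ := exists_rat_btwn (sub_lt_sub_right (Rat.cast_lt.2 hp) t)
    exact ⟨q, p, hk, by linarith, by linarith⟩
  obtain ⟨p', hp', hmem⟩ := h.choose_spec
  rw [hk, Option.mem_some_iff] at hp'
  subst hp'
  rwa [shiftedRatPoint, dif_pos h]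

theorem eq_of_rat_add_mul_sqrt_two_eq {q₁ q₂ : ℚ} {m n : ℕ}
    (h : (q₁ : ℝ) + m * √2 = q₂ + n * √2) : m = n := by
  by_contra hmn
  have hmn' : ((m : ℚ) - n) ≠ 0 := sub_ne_zero.2 (by exact_mod_cast hmn)
  refine irrational_sqrt_two.ratCast_mul hmn' ⟨q₂ - q₁, ?_⟩
  push_cast
  linarith

noncomputable def densePoint (l : List (ℚ × ℚ)) : ℕ → SorgenfreyLine :=
  shiftedRatPoint (Encodable.encode l * √2) l

theorem densePoint_zero_injective : Function.Injective fun l => densePoint l 0 := by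
  intro l l' h
  obtain ⟨q, hq⟩ := exists_shiftedRatPoint_eq (Encodable.encode l * √2) l 0
  obtain ⟨q', hq'⟩ := exists_shiftedRatPoint_eq (Encodable.encode l' * √2) l' 0
  have : (q : ℝ) + Encodable.encode l * √2 = q' + Encodable.encode l' * √2 :=
    hq.symm.trans (h.trans hq')
  exact Encodable.encode_injective (eq_of_rat_add_mul_sqrt_two_eq this)

theorem dense_range_densePoint : Dense (range densePoint) := by
  refine dense_iff_inter_open.2 fun U hU ⟨x, hx⟩ => ?_
  obtain ⟨l, hl, hlU⟩ := exists_ratBox_subset_of_isOpen hU hx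
  refine ⟨densePoint l, hlU fun k p hk => ?_, l, rfl⟩
  exact shiftedRatPoint_mem_Ico _ hk (hl p (List.mem_of_getElem? hk))

theorem not_CDH_of_injOn_of_preperfect {X : Type*} [TopologicalSpace X] {D A K : Set X}
    {f : X → SorgenfreyLine} (hDc : D.Countable) (hDd : Dense D) (hf : Continuous f)
    (hfD : InjOn f D) (hAc : A.Countable) (hA : Preperfect A) (hne : A.Nonempty)
    (hK : IsCompact K) (hAK : A ⊆ K) : ¬ CDH X := by
  intro hX
  obtain ⟨h, hh⟩ := hX D (D ∪ A) hDc hDd (hDc.union hAc) (hDd.mono subset_union_left)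
  have hAD : MapsTo h.symm A D := by
    intro x hx
    obtain ⟨y, hy, rfl⟩ : x ∈ h '' D := hh ▸ Or.inr hx
    simpa using hy
  exact not_injOn_of_preperfect hK hAK hA hne (hf.comp h.symm.continuous)
    (hfD.comp h.symm.injective.injOn hAD)

end SorgenfreyLine

theorem sorgenfrey_power_not_CDH : ¬ CDH (ℕ → SorgenfreyLine) := by
  open SorgenfreyLine in
  obtain ⟨a, b, hab⟩ := exists_pair_ne SorgenfreyLine
  exact not_CDH_of_injOn_of_preperfect (countable_range densePoint) dense_range_densePoint
    (continuous_apply 0) densePoint_zero_injective.injOn_range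
    (countable_range _) (preperfect_range_finsetIndicator a b hab) (range_nonempty _)
    (isCompact_univ_pi fun _ => (toFinite _).isCompact) (range_finsetIndicator_subset a b)
end

section
/- There are exactly continuum-many homeomorphism classes of countable metrizable topological spaces. -/
/-!
Upper bound: a countable metrizable space is regular and second countable, hence embeds in
`ℓ^∞ = ℕ →ᵇ ℝ`, so every class is represented by a countable subset of a set of size `𝔠`;
there are `𝔠 ^ ℵ₀ = 𝔠` of these.

Lower bound: `cbInvariant X` collects the `n` such that some point lying in every finite
Cantor–Bendixson derivative of `X` is a limit of points of rank `n` but not of rank `n + 1`.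
For `A ⊆ ℕ` we realise `A` as this invariant by a subset-closed family of finite subsets of
`ℕ × ℤ` with the Cantor topology, where derivatives are combinatorial: a member is a limit of
other members iff it has infinitely many one-point extensions in the family. For `n ∈ A` the
apex `{(n, 0)}` is approached both by a perfect part and by points of rank exactly `n`.
-/

open Set Topology Filter

/-- Countable metrizable topological spaces (as a bundled sigma type). -/
def CtblMetrSpace : Type 1 :=
  {X : (α : Type) × TopologicalSpace α //
    Countable X.1 ∧ @TopologicalSpace.MetrizableSpace X.1 X.2}

/-- Two such spaces are related iff they are homeomorphic. -/
def HomeoRel (X Y : CtblMetrSpace) : Prop :=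
  Nonempty (@Homeomorph X.1.1 Y.1.1 X.1.2 Y.1.2)

def CtblMetrSpace.of (X : Type) [TopologicalSpace X] [Countable X]
    [TopologicalSpace.MetrizableSpace X] : CtblMetrSpace :=
  ⟨⟨X, ‹_›⟩, ‹_›, ‹_›⟩

section CantorBendixson

variable {X Y : Type*} [TopologicalSpace X] [TopologicalSpace Y]

variable (X) in
def rankLayer (n : ℕ) : Set X :=
  derivedSet^[n] univ \ derivedSet^[n + 1] univ

variable (X) in
def cbInvariant : Set ℕ :=
  {n | ∃ x ∈ ⋂ j, derivedSet^[j] (univ : Set X),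
    x ∈ closure (rankLayer X n) ∧ x ∉ closure (rankLayer X (n + 1))}

theorem Homeomorph.image_derivedSet (h : X ≃ₜ Y) (s : Set X) :
    h '' derivedSet s = derivedSet (h '' s) := by
  refine (h.continuous.image_derivedSet h.injective).antisymm ?_
  have := image_mono (f := h) (h.symm.continuous.image_derivedSet h.symm.injective (A := h '' s))
  simpa only [image_image, h.apply_symm_apply, h.symm_apply_apply, image_id'] using this

theorem Homeomorph.image_iterate_derivedSet_univ (h : X ≃ₜ Y) (j : ℕ) :
    h '' derivedSet^[j] univ = derivedSet^[j] univ := by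
  induction j with
  | zero => exact image_univ_of_surjective h.surjective
  | succ j ih => rw [Function.iterate_succ_apply', Function.iterate_succ_apply',
      h.image_derivedSet, ih]

theorem Homeomorph.image_rankLayer (h : X ≃ₜ Y) (n : ℕ) : h '' rankLayer X n = rankLayer Y n := by
  rw [rankLayer, image_sdiff h.injective, h.image_iterate_derivedSet_univ,
    h.image_iterate_derivedSet_univ, rankLayer]

theorem Homeomorph.cbInvariant_subset (h : X ≃ₜ Y) : cbInvariant X ⊆ cbInvariant Y := by
  rintro n ⟨x, hx, hn, hn'⟩
  refine ⟨h x, ?_, ?_, ?_⟩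
  · simp only [mem_iInter, ← h.image_iterate_derivedSet_univ] at hx ⊢
    exact fun j => mem_image_of_mem h (hx j)
  · rw [← h.image_rankLayer, ← h.image_closure]
    exact mem_image_of_mem h hn
  · rwa [← h.image_rankLayer, ← h.image_closure, h.injective.mem_set_image]

theorem Homeomorph.cbInvariant_eq (h : X ≃ₜ Y) : cbInvariant X = cbInvariant Y :=
  h.cbInvariant_subset.antisymm h.symm.cbInvariant_subset

theorem derivedSet_preimage_val {F G : Set X} (hG : G ⊆ F) :
    derivedSet ((↑) ⁻¹' G : Set F) = (↑) ⁻¹' derivedSet G := by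
  ext x
  simp only [mem_preimage, mem_derivedSet, accPt_principal_iff_clusterPt,
    ← mem_closure_iff_clusterPt, closure_subtype]
  rw [image_sdiff Subtype.val_injective, image_preimage_eq_of_subset (hG.trans
    Subtype.range_val.superset), image_singleton]

theorem iterate_derivedSet_univ_subtype {F : Set X} {G : ℕ → Set X} (h0 : G 0 = F)
    (hsub : ∀ j, G j ⊆ F) (hsucc : ∀ j, derivedSet (G j) = G (j + 1)) (j : ℕ) :
    derivedSet^[j] (univ : Set F) = (↑) ⁻¹' G j := by
  induction j with
  | zero => rw [h0]; exact Subtype.coe_preimage_self F |>.symm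
  | succ j ih => rw [Function.iterate_succ_apply', ih, derivedSet_preimage_val (hsub j), hsucc]

theorem cbInvariant_subtype {F : Set X} {G : ℕ → Set X} (h0 : G 0 = F)
    (hsub : ∀ j, G j ⊆ F) (hsucc : ∀ j, derivedSet (G j) = G (j + 1)) :
    cbInvariant F = {n | ∃ x ∈ ⋂ j, G j,
      x ∈ closure (G n \ G (n + 1)) ∧ x ∉ closure (G (n + 1) \ G (n + 2))} := by
  have hlayer (n : ℕ) : (↑) '' rankLayer F n = G n \ G (n + 1) := by
    rw [rankLayer, iterate_derivedSet_univ_subtype h0 hsub hsucc,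
      iterate_derivedSet_univ_subtype h0 hsub hsucc, ← preimage_sdiff,
      image_preimage_eq_of_subset ((sdiff_subset.trans (hsub n)).trans Subtype.range_val.superset)]
  ext n
  simp only [cbInvariant, iterate_derivedSet_univ_subtype h0 hsub hsucc, ← preimage_iInter,
    closure_subtype, hlayer, mem_ofPred_eq]
  exact ⟨fun ⟨x, hx, hn⟩ => ⟨x, hx, hn⟩,
    fun ⟨x, hx, hn⟩ => ⟨⟨x, hsub 0 (mem_iInter.1 hx 0)⟩, hx, hn⟩⟩

end CantorBendixson

section FinsetTopology

variable {V : Type*} [DecidableEq V]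

local instance : TopologicalSpace (Finset V) :=
  .induced (fun s i => decide (i ∈ s)) inferInstance

theorem Finset.nhds_basis_agreeOn (s : Finset V) :
    (𝓝 s).HasBasis Set.Finite fun E => {t | ∀ i ∈ E, (i ∈ t ↔ i ∈ s)} := by
  rw [nhds_induced, nhds_pi]
  simp only [nhds_discrete, ← principal_singleton]
  convert (hasBasis_pi_principal _).comap _ using 2 with E
  ext t
  simp

theorem Finset.mem_closure_iff_agreeOn {s : Finset V} {G : Set (Finset V)} :
    s ∈ closure G ↔ ∀ E : Finset V, ∃ t ∈ G, ∀ i ∈ E, (i ∈ t ↔ i ∈ s) := by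
  rw [mem_closure_iff_nhds_basis (Finset.nhds_basis_agreeOn s)]
  refine ⟨fun h E => ?_, fun h E hE => ?_⟩
  · obtain ⟨t, htG, ht⟩ := h E E.finite_toSet
    exact ⟨t, htG, ht⟩
  · obtain ⟨t, htG, ht⟩ := h hE.toFinset
    exact ⟨t, htG, fun i hi => ht i (hE.mem_toFinset.2 hi)⟩

theorem IsLowerSet.derivedSet_eq {G : Set (Finset V)} (hG : IsLowerSet G) :
    derivedSet G = {s | {i | insert i s ∈ G}.Infinite} := by
  ext s
  simp only [mem_derivedSet, accPt_principal_iff_clusterPt, ← mem_closure_iff_clusterPt,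
    Finset.mem_closure_iff_agreeOn, mem_ofPred_eq]
  constructor
  · intro h hfin
    obtain ⟨t, ⟨htG, hts⟩, hagree⟩ := h (s ∪ hfin.toFinset)
    have hst : s ⊆ t := fun i hi => (hagree i (Finset.mem_union_left _ hi)).2 hi
    obtain ⟨i, hit, his⟩ := Finset.exists_of_ssubset (hst.ssubset_of_ne (Ne.symm hts))
    have hiG : insert i s ∈ G := hG (Finset.insert_subset hit hst) htG
    exact his ((hagree i (Finset.mem_union_right _ (hfin.mem_toFinset.2 hiG))).1 hit)
  · intro h E
    obtain ⟨i, hiG, hiE⟩ := h.exists_notMem_finset (E ∪ s)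
    rw [Finset.mem_union, not_or] at hiE
    refine ⟨insert i s, ⟨hiG, fun he => hiE.2 (he ▸ Finset.mem_insert_self i s)⟩, fun j hj => ?_⟩
    rw [Finset.mem_insert, or_iff_right]
    rintro rfl
    exact hiE.1 hj

local instance [Countable V] : TopologicalSpace.MetrizableSpace (Finset V) :=
  IsEmbedding.metrizableSpace (f := fun s (i : V) => decide (i ∈ s))
    ⟨.induced _, fun s t h => by ext i; simpa using congrFun h i⟩

open Finset

/- Block `n` of the vertex set `ℕ × ℤ` consists of the apex `(n, 0)`, the perfect vertices
`(n, i)` with `i > 0` and the ranked vertices `(n, i)` with `i < 0`. -/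
def perfectFamily (A : Set ℕ) : Set (Finset (ℕ × ℤ)) :=
  {s | ∃ n ∈ A, ∀ v ∈ s, v.1 = n ∧ 0 ≤ v.2}

def negCount (s : Finset (ℕ × ℤ)) : ℕ := #{v ∈ s | v.2 < 0}

def rankedFamily (A : Set ℕ) (j : ℕ) : Set (Finset (ℕ × ℤ)) :=
  {s | ∃ n ∈ A, (∀ v ∈ s, v.1 = n ∧ v.2 ≤ 0) ∧ negCount s + j ≤ n + 1}

def levelFamily (A : Set ℕ) (j : ℕ) : Set (Finset (ℕ × ℤ)) :=
  perfectFamily A ∪ rankedFamily A j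

variable {A : Set ℕ} {j k n : ℕ} {s t x : Finset (ℕ × ℤ)}

theorem negCount_mono (h : s ⊆ t) : negCount s ≤ negCount t :=
  card_le_card (filter_subset_filter _ h)

theorem negCount_insert {i : ℕ × ℤ} (hi : i.2 < 0) (his : i ∉ s) :
    negCount (insert i s) = negCount s + 1 := by
  rw [negCount, filter_insert, if_pos hi, card_insert_of_notMem (by simp [his])]
  rfl

theorem negCount_pos {v : ℕ × ℤ} (hv : v ∈ s) (hneg : v.2 < 0) : 0 < negCount s :=
  card_pos.2 ⟨v, mem_filter.2 ⟨hv, hneg⟩⟩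

theorem infinite_setOf_fst_eq_and_neg (n : ℕ) : {v : ℕ × ℤ | v.1 = n ∧ v.2 < 0}.Infinite := by
  refine (Set.infinite_range_of_injective (f := fun m : ℕ => (n, -(m : ℤ) - 1))
    fun a b h => by simpa using h).mono ?_
  rintro _ ⟨m, rfl⟩
  exact ⟨rfl, by dsimp only; omega⟩

theorem infinite_setOf_fst_eq_and_nonneg (n : ℕ) :
    {v : ℕ × ℤ | v.1 = n ∧ 0 ≤ v.2}.Infinite := by
  refine (Set.infinite_range_of_injective (f := fun m : ℕ => (n, (m : ℤ)))
    fun a b h => by simpa using h).mono ?_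
  rintro _ ⟨m, rfl⟩
  simp

theorem isLowerSet_levelFamily : IsLowerSet (levelFamily A j) := by
  rintro s t hts (⟨n, hn, hs⟩ | ⟨n, hn, hs, hcount⟩)
  · exact Or.inl ⟨n, hn, fun v hv => hs v (hts hv)⟩
  · exact Or.inr ⟨n, hn, fun v hv => hs v (hts hv),
      (Nat.add_le_add_right (negCount_mono hts) j).trans hcount⟩

theorem levelFamily_subset_zero : levelFamily A j ⊆ levelFamily A 0 :=
  union_subset_union_right _ fun _ ⟨n, hn, hs, hcount⟩ => ⟨n, hn, hs, by omega⟩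

theorem perfectFamily_subset_levelFamily : perfectFamily A ⊆ levelFamily A j :=
  subset_union_left

theorem mem_levelFamily_succ_of_infinite (h : {i | insert i s ∈ levelFamily A j}.Infinite) :
    s ∈ levelFamily A (j + 1) := by
  by_cases hperf : s ∈ perfectFamily A
  · exact Or.inl hperf
  obtain ⟨i₀, hi₀⟩ := h.nonempty
  have hs : s ∈ rankedFamily A j := by
    rcases hi₀ with ⟨n, hn, hins⟩ | ⟨n, hn, hins, hcount⟩
    · exact absurd ⟨n, hn, fun v hv => hins v (mem_insert_of_mem hv)⟩ hperf
    · exact ⟨n, hn, fun v hv => hins v (mem_insert_of_mem hv),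
        (Nat.add_le_add_right (negCount_mono (subset_insert _ _)) j).trans hcount⟩
  obtain ⟨n, hn, hblock, -⟩ := hs
  obtain ⟨w, hws, hw⟩ : ∃ w ∈ s, w.2 < 0 := by
    by_contra! hnonneg
    exact hperf ⟨n, hn, fun v hv => ⟨(hblock v hv).1, hnonneg v hv⟩⟩
  obtain ⟨i, hi, hifresh⟩ := h.exists_notMem_finset (insert (n, 0) s)
  rw [Finset.mem_insert, not_or] at hifresh
  rcases hi with ⟨m, -, hins⟩ | ⟨m, -, hins, hcount⟩
  · exact absurd (hins w (mem_insert_of_mem hws)).2 hw.not_ge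
  · have hm : m = n := by rw [← (hins w (mem_insert_of_mem hws)).1, (hblock w hws).1]
    subst hm
    obtain ⟨hi1, hi2⟩ := hins i (mem_insert_self i s)
    have hineg : i.2 < 0 := lt_of_le_of_ne hi2 fun h => hifresh.1 (Prod.ext hi1 h)
    rw [negCount_insert hineg hifresh.2] at hcount
    exact Or.inr ⟨m, hn, hblock, by omega⟩

theorem infinite_of_mem_levelFamily_succ (h : s ∈ levelFamily A (j + 1)) :
    {i | insert i s ∈ levelFamily A j}.Infinite := by
  rcases h with ⟨n, hn, hs⟩ | ⟨n, hn, hs, hcount⟩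
  · refine (infinite_setOf_fst_eq_and_nonneg n).mono fun i hi => Or.inl ⟨n, hn, ?_⟩
    simp only [Finset.mem_insert, forall_eq_or_imp]
    exact ⟨hi, hs⟩
  · refine ((infinite_setOf_fst_eq_and_neg n).sdiff s.finite_toSet).mono ?_
    rintro i ⟨hi, his⟩
    refine Or.inr ⟨n, hn, ?_, ?_⟩
    · simp only [Finset.mem_insert, forall_eq_or_imp]
      exact ⟨⟨hi.1, hi.2.le⟩, hs⟩
    · rw [negCount_insert hi.2 his]
      omega

theorem mem_closure_levelFamily_sdiff (hn : n ∈ A) (hk : k ≤ n) (hx : ∀ v ∈ x, v = (n, 0)) :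
    x ∈ closure (levelFamily A k \ levelFamily A (k + 1)) := by
  rw [Finset.mem_closure_iff_agreeOn]
  intro E
  obtain ⟨S, hSsub, hScard⟩ :=
    ((infinite_setOf_fst_eq_and_neg n).sdiff E.finite_toSet).exists_subset_card_eq (n + 1 - k)
  have hS (v) (hv : v ∈ S) : (v.1 = n ∧ v.2 < 0) ∧ v ∉ E := hSsub hv
  obtain ⟨w, hw⟩ : S.Nonempty := Finset.card_pos.1 (by omega)
  have hcount : negCount (x ∪ S) = n + 1 - k := by
    rw [negCount, Finset.filter_union, Finset.filter_true_of_mem fun v hv => (hS v hv).1.2,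
      Finset.filter_false_of_mem fun v hv => by simp [hx v hv], Finset.empty_union, hScard]
  refine ⟨x ∪ S, ⟨Or.inr ⟨n, hn, fun v hv => ?_, by omega⟩, ?_⟩, fun i hi => ?_⟩
  · rcases Finset.mem_union.1 hv with hv | hv
    · simp [hx v hv]
    · exact ⟨(hS v hv).1.1, (hS v hv).1.2.le⟩
  · rintro (⟨m, -, hperf⟩ | ⟨m, -, hblock, hcount'⟩)
    · exact (hS w hw).1.2.not_ge (hperf w (Finset.mem_union_right _ hw)).2
    · have : m = n := by rw [← (hblock w (Finset.mem_union_right _ hw)).1, (hS w hw).1.1]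
      omega
  · rw [Finset.mem_union, or_iff_left fun hiS => (hS i hiS).2 hi]

theorem exists_of_mem_closure_levelFamily_sdiff
    (h : x ∈ closure (levelFamily A k \ levelFamily A (k + 1))) :
    ∃ n ∈ A, k ≤ n ∧ ∀ v ∈ x, v.1 = n ∧ v.2 ≤ 0 := by
  obtain ⟨t, ⟨ht, ht'⟩, hagree⟩ := Finset.mem_closure_iff_agreeOn.1 h x
  have hxt : x ⊆ t := fun i hi => (hagree i hi).2 hi
  rcases ht with hperf | ⟨n, hn, hblock, hcount⟩
  · exact absurd (perfectFamily_subset_levelFamily hperf) ht'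
  obtain ⟨w, hwt, hw⟩ : ∃ w ∈ t, w.2 < 0 := by
    by_contra! hnonneg
    exact ht' (Or.inl ⟨n, hn, fun v hv => ⟨(hblock v hv).1, hnonneg v hv⟩⟩)
  have := negCount_pos hwt hw
  exact ⟨n, hn, by omega, fun v hv => hblock v (hxt hv)⟩

theorem eq_apex_of_mem_levelFamily (hx : x ∈ levelFamily A (n + 2))
    (hblock : ∀ v ∈ x, v.1 = n ∧ v.2 ≤ 0) : ∀ v ∈ x, v = (n, 0) := by
  intro v hv
  refine Prod.ext (hblock v hv).1 ((hblock v hv).2.antisymm ?_)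
  by_contra! hneg
  rcases hx with ⟨m, -, hperf⟩ | ⟨m, -, hblock', hcount⟩
  · exact hneg.not_ge (hperf v hv).2
  · have : m = n := by rw [← (hblock' v hv).1, (hblock v hv).1]
    have := negCount_pos hv hneg
    omega

theorem derivedSet_levelFamily : derivedSet (levelFamily A j) = levelFamily A (j + 1) :=
  isLowerSet_levelFamily.derivedSet_eq.trans <|
    Set.ext fun _ => ⟨mem_levelFamily_succ_of_infinite, infinite_of_mem_levelFamily_succ⟩

theorem cbInvariant_levelFamily (A : Set ℕ) : cbInvariant (levelFamily A 0) = A := by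
  rw [cbInvariant_subtype (G := levelFamily A) rfl (fun _ => levelFamily_subset_zero)
    fun _ => derivedSet_levelFamily]
  ext k
  constructor
  · rintro ⟨x, hx, hk, hk'⟩
    obtain ⟨n, hn, hkn, hblock⟩ := exists_of_mem_closure_levelFamily_sdiff hk
    have hapex := eq_apex_of_mem_levelFamily (Set.mem_iInter.1 hx (n + 2)) hblock
    obtain rfl : k = n := by
      by_contra hne
      exact hk' (mem_closure_levelFamily_sdiff hn (by omega) hapex)
    exact hn
  · intro hk
    have hapex : ∀ v ∈ ({(k, 0)} : Finset (ℕ × ℤ)), v = (k, 0) := fun v => Finset.mem_singleton.1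
    refine ⟨{(k, 0)}, Set.mem_iInter.2 fun j => perfectFamily_subset_levelFamily
      ⟨k, hk, by simp⟩, mem_closure_levelFamily_sdiff hk le_rfl hapex, fun h => ?_⟩
    obtain ⟨n, -, hkn, hblock⟩ := exists_of_mem_closure_levelFamily_sdiff h
    have := (hblock _ (Finset.mem_singleton_self _)).1
    omega

def levelSpace (A : Set ℕ) : CtblMetrSpace := .of (levelFamily A 0)

end FinsetTopology

section Cardinality

open Cardinal
open scoped BoundedContinuousFunction

def homeoClassCbInvariant : Quot HomeoRel → Set ℕ :=
  Quot.lift (fun X => @cbInvariant X.1.1 X.1.2) fun X Y ⟨h⟩ =>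
    @Homeomorph.cbInvariant_eq _ _ X.1.2 Y.1.2 h

theorem continuum_le_card_quot_homeoRel : 𝔠 ≤ #(Quot HomeoRel) := by
  have hinj : Function.Injective fun A => Quot.mk HomeoRel (levelSpace A) :=
    Function.LeftInverse.injective (g := homeoClassCbInvariant) cbInvariant_levelFamily
  simpa using lift_mk_le_lift_mk_of_injective hinj

theorem mk_boundedContinuousFunction_le : #(ℕ →ᵇ ℝ) ≤ 𝔠 := by
  simpa [mk_real, continuum_power_aleph0] using
    mk_le_of_injective (DFunLike.coe_injective (F := ℕ →ᵇ ℝ))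

noncomputable def lInftySubspace (t : {t : Set (ℕ →ᵇ ℝ) // #t ≤ ℵ₀}) : CtblMetrSpace :=
  @CtblMetrSpace.of t _ (mk_le_aleph0_iff.1 t.2) _

theorem surjective_lInftySubspace :
    Function.Surjective fun t => Quot.mk HomeoRel (lInftySubspace t) := by
  refine Quot.ind fun ⟨⟨X, _⟩, _, _⟩ => ?_
  obtain ⟨f, hf⟩ := TopologicalSpace.exists_embedding_l_infty X
  exact ⟨⟨Set.range f, mk_range_le.trans (mk_le_aleph0_iff.2 ‹_›)⟩,
    Quot.sound ⟨hf.toHomeomorph.symm⟩⟩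

theorem card_quot_homeoRel_le_continuum : #(Quot HomeoRel) ≤ 𝔠 := by
  have hsurj := lift_mk_le_lift_mk_of_surjective surjective_lInftySubspace
  rw [lift_id'] at hsurj
  calc #(Quot HomeoRel) ≤ lift #{t : Set (ℕ →ᵇ ℝ) // #t ≤ ℵ₀} := hsurj
    _ ≤ lift (max #(ℕ →ᵇ ℝ) ℵ₀ ^ ℵ₀) := lift_le.2 (mk_bounded_set_le _ _)
    _ ≤ lift 𝔠 := lift_le.2 <| (power_le_power_right <|
        max_le mk_boundedContinuousFunction_le aleph0_le_continuum).trans_eq continuum_power_aleph0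
    _ = 𝔠 := lift_continuum

end Cardinality

theorem card_homeo_classes_ctbl_metrizable :
    Cardinal.mk (Quot HomeoRel) = Cardinal.continuum.{1} :=
  card_quot_homeoRel_le_continuum.antisymm continuum_le_card_quot_homeoRel
end

section
/- The product 𝔸 × (ω+1) of the double arrow space with a convergent sequence is not homeomorphic to 𝔸, and consequently 𝔸 contains no subspace homeomorphic to 𝔸 × (ω+1). -/
open Set Topology

/-!
A continuous `g : 𝔸 → ℝ` has `g t⁻ = g t⁺` for all but countably many `t`: if
`dist (g t⁻) (g t⁺) ≥ ε`, pick `r t > t` with `g` within `ε / 2` of `g t⁺` over `(t, r t)`; no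
other such `t'` lies in `(t, r t)`, as `g t'⁻` and `g t'⁺` would both be `ε / 2`-close to `g t⁺`.
So these intervals are disjoint, hence countably many.

Given a continuous injection `h : 𝔸 × (ω+1) → 𝔸`, choose `t` such that `h (t⁻, n)` and
`h (t⁺, n)` have the same projection for every `n`. The limits `h (t⁻, ∞) ≠ h (t⁺, ∞)` are then
the two arrows `s⁻ < s⁺` over one `s`. Points near `s⁻` other than itself and below `s⁺` project
below `s`, points near `s⁺` other than itself and above `s⁻` project above `s`; so the two
sequences converging to them cannot have equal projections.
-/

open Filter

namespace DoubleArrow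

def proj (x : DoubleArrow) : ℝ := (ofLex x.val).1

/-- `x.arrow = true` for the points `t⁺` of the upper copy of `[0, 1)`. -/
def arrow (x : DoubleArrow) : Bool := (ofLex x.val).2

def lower (t : ℝ) (ht : t ∈ Ioc 0 1) : DoubleArrow := ⟨toLex (t, false), .inl ⟨rfl, ht⟩⟩

def upper (t : ℝ) (ht : t ∈ Ico 0 1) : DoubleArrow := ⟨toLex (t, true), .inr ⟨rfl, ht⟩⟩

instance : Nonempty DoubleArrow := ⟨upper 0 ⟨le_rfl, zero_lt_one⟩⟩

variable {x y z : DoubleArrow}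

theorem lt_iff_lex : x < y ↔ x.proj < y.proj ∨ x.proj = y.proj ∧ x.arrow < y.arrow :=
  Prod.Lex.lt_iff

theorem ext_proj_arrow (hp : x.proj = y.proj) (ha : x.arrow = y.arrow) : x = y :=
  Subtype.ext <| show ofLex x.val = ofLex y.val from Prod.ext hp ha

theorem lt_of_proj_lt (h : x.proj < y.proj) : x < y := lt_iff_lex.2 (.inl h)

theorem monotone_proj : Monotone proj := fun _ _ h =>
  not_lt.1 fun hlt => (lt_of_proj_lt hlt).not_ge h

theorem lower_lt_upper {t : ℝ} (ht : t ∈ Ioc 0 1) (ht' : t ∈ Ico 0 1) : lower t ht < upper t ht' :=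
  lt_iff_lex.2 (.inr ⟨rfl, Bool.false_lt_true⟩)

theorem proj_mem_Icc (x : DoubleArrow) : x.proj ∈ Icc 0 1 := by
  rcases x.property with ⟨-, h⟩ | ⟨-, h⟩
  exacts [Ioc_subset_Icc_self h, Ico_subset_Icc_self h]

theorem continuous_proj : Continuous proj := by
  let projIcc : DoubleArrow → Icc (0 : ℝ) 1 := fun x => ⟨x.proj, x.proj_mem_Icc⟩
  have hsurj : Function.Surjective projIcc := by
    rintro ⟨t, ht0, ht1⟩
    rcases ht0.eq_or_lt with rfl | ht0
    · exact ⟨upper 0 ⟨le_rfl, zero_lt_one⟩, rfl⟩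
    · exact ⟨lower t ⟨ht0, ht1⟩, rfl⟩
  exact continuous_subtype_val.comp
    (Monotone.continuous_of_surjective (fun _ _ h => monotone_proj h) hsurj)

theorem arrow_eq_of_lt_of_proj_eq (hxy : x < y) (hp : x.proj = y.proj) :
    x.arrow = false ∧ y.arrow = true := by
  rcases lt_iff_lex.1 hxy with h | ⟨-, h⟩
  · exact absurd hp h.ne
  · exact Bool.lt_iff.1 h

theorem proj_lt_of_lt_of_ne (hxy : x < y) (hp : x.proj = y.proj) (hzy : z < y) (hzx : z ≠ x) :
    z.proj < x.proj := by
  rcases lt_iff_lex.1 hzy with h | ⟨hzp, h⟩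
  · exact hp ▸ h
  · refine absurd (ext_proj_arrow (hzp.trans hp.symm) ?_) hzx
    rw [(Bool.lt_iff.1 h).1, (arrow_eq_of_lt_of_proj_eq hxy hp).1]

theorem proj_gt_of_gt_of_ne (hxy : x < y) (hp : x.proj = y.proj) (hxz : x < z) (hzy : z ≠ y) :
    y.proj < z.proj := by
  rcases lt_iff_lex.1 hxz with h | ⟨hzp, h⟩
  · exact hp ▸ h
  · refine absurd (ext_proj_arrow (hzp.symm.trans hp) ?_) hzy
    rw [(Bool.lt_iff.1 h).2, (arrow_eq_of_lt_of_proj_eq hxy hp).2]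

theorem comap_proj_nhdsGT_le_nhds (hy : y.arrow = true) : comap proj (𝓝[>] y.proj) ≤ 𝓝 y := by
  intro s hs
  have hy1 : y.proj < 1 := by
    rcases y.property with ⟨h, -⟩ | ⟨-, h⟩
    · exact absurd (h.symm.trans hy) Bool.false_ne_true
    · exact h.2
  obtain ⟨u, hyu, hsub⟩ :=
    exists_Ico_subset_of_mem_nhds hs ⟨lower 1 ⟨one_pos, le_rfl⟩, lt_of_proj_lt hy1⟩
  have hproj : y.proj < u.proj := by
    rcases lt_iff_lex.1 hyu with h | ⟨-, h⟩
    · exact h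
    · exact absurd ((Bool.lt_iff.1 h).1.symm.trans hy) Bool.false_ne_true
  exact mem_comap.2 ⟨Ioo y.proj u.proj, Ioo_mem_nhdsGT hproj,
    fun z hz => hsub ⟨(lt_of_proj_lt hz.1).le, lt_of_proj_lt hz.2⟩⟩

theorem countable_setOf_le_dist {M : Type*} [PseudoMetricSpace M] {g : DoubleArrow → M}
    (hg : Continuous g) {ε : ℝ} (hε : 0 < ε) :
    {t : ℝ | ∃ x y : DoubleArrow, x < y ∧ x.proj = t ∧ y.proj = t ∧
      ε ≤ dist (g x) (g y)}.Countable := by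
  set S := {t : ℝ | ∃ x y : DoubleArrow, x < y ∧ x.proj = t ∧ y.proj = t ∧ ε ≤ dist (g x) (g y)}
  have hpair : ∀ t ∈ S, ∃ x y : DoubleArrow, x < y ∧ x.proj = t ∧ y.proj = t ∧
      ε ≤ dist (g x) (g y) := fun _ ht => ht
  choose! a b hab ha hb hdist using hpair
  have hnear : ∀ t ∈ S, ∃ r, t < r ∧ ∀ z : DoubleArrow, z.proj ∈ Ioo t r →
      dist (g z) (g (b t)) < ε / 2 := by
    intro t ht
    have hle := comap_proj_nhdsGT_le_nhds
      (arrow_eq_of_lt_of_proj_eq (hab t ht) ((ha t ht).trans (hb t ht).symm)).2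
    rw [hb t ht] at hle
    obtain ⟨s, hs, hsub⟩ := mem_comap.1 <|
      (hg.tendsto (b t)).mono_left hle (Metric.ball_mem_nhds _ (half_pos hε))
    obtain ⟨r, htr, hIoo⟩ := mem_nhdsGT_iff_exists_Ioo_subset.1 hs
    exact ⟨r, htr, fun z hz => hsub (hIoo hz)⟩
  choose! r htr hr using hnear
  have hle : ∀ t ∈ S, ∀ t' ∈ S, t < t' → r t ≤ t' := by
    intro t ht t' ht' hlt
    by_contra! hrt
    have ha' := hr t ht (a t') (by rw [ha t' ht']; exact ⟨hlt, hrt⟩)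
    have hb' := hr t ht (b t') (by rw [hb t' ht']; exact ⟨hlt, hrt⟩)
    linarith [hdist t' ht', dist_triangle_right (g (a t')) (g (b t')) (g (b t))]
  refine Set.PairwiseDisjoint.countable_of_Ioo (y := r) ?_ htr
  have hdisj : ∀ t ∈ S, ∀ t' ∈ S, t < t' → Disjoint (Ioo t (r t)) (Ioo t' (r t')) :=
    fun t ht t' ht' hlt => disjoint_left.2 fun _ hz hz' =>
      (hz.2.trans_le (hle t ht t' ht' hlt)).not_gt hz'.1
  intro t ht t' ht' hne
  rcases hne.lt_or_gt with hlt | hlt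
  exacts [hdisj t ht t' ht' hlt, (hdisj t' ht' t ht hlt).symm]

theorem countable_setOf_ne {M : Type*} [MetricSpace M] {g : DoubleArrow → M}
    (hg : Continuous g) :
    {t : ℝ | ∃ x y : DoubleArrow, x < y ∧ x.proj = t ∧ y.proj = t ∧ g x ≠ g y}.Countable := by
  refine (countable_iUnion fun k : ℕ =>
    countable_setOf_le_dist hg (Nat.one_div_pos_of_nat (n := k))).mono ?_
  rintro t ⟨x, y, hxy, hx, hy, hne⟩
  obtain ⟨k, hk⟩ := exists_nat_one_div_lt (dist_pos.2 hne)
  exact mem_iUnion.2 ⟨k, x, y, hxy, hx, hy, hk.le⟩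

theorem proj_comp_ne_proj_comp {Y : Type*} [TopologicalSpace Y] {y : Y} [(𝓝[≠] y).NeBot]
    {f g : Y → DoubleArrow} (hf : ContinuousAt f y) (hg : ContinuousAt g y)
    (hfy : ∀ z ≠ y, f z ≠ f y) (hgy : ∀ z ≠ y, g z ≠ g y) (hfg : f y ≠ g y) :
    proj ∘ f ≠ proj ∘ g := by
  intro heq
  wlog hlt : f y < g y generalizing f g
  · exact this hg hf hgy hfy hfg.symm heq.symm (lt_of_le_of_ne (not_lt.1 hlt) hfg.symm)
  have hp : (f y).proj = (g y).proj := congrFun heq y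
  have hne : ∀ᶠ z in 𝓝[≠] y, z ≠ y := self_mem_nhdsWithin
  have hfz : ∀ᶠ z in 𝓝[≠] y, (f z).proj < (f y).proj :=
    (((hf.mono_left nhdsWithin_le_nhds).eventually (Iio_mem_nhds hlt)).and hne).mono
      fun z ⟨hz, hzy⟩ => proj_lt_of_lt_of_ne hlt hp hz (hfy z hzy)
  have hgz : ∀ᶠ z in 𝓝[≠] y, (g y).proj < (g z).proj :=
    (((hg.mono_left nhdsWithin_le_nhds).eventually (Ioi_mem_nhds hlt)).and hne).mono
      fun z ⟨hz, hzy⟩ => proj_gt_of_gt_of_ne hlt hp hz (hgy z hzy)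
  obtain ⟨z, hfz, hgz⟩ := (hfz.and hgz).exists
  exact ((hfz.trans_eq hp).trans hgz).ne (congrFun heq z)

theorem not_injective_of_continuous_prod {Y : Type*} [TopologicalSpace Y] [Countable Y] (y : Y)
    [(𝓝[≠] y).NeBot] {h : DoubleArrow × Y → DoubleArrow} (hc : Continuous h) :
    ¬ Function.Injective h := by
  intro hi
  have hC : (⋃ n : Y, {t : ℝ | ∃ a b : DoubleArrow, a < b ∧ a.proj = t ∧ b.proj = t ∧
      (h (a, n)).proj ≠ (h (b, n)).proj}).Countable :=
    countable_iUnion fun n => countable_setOf_ne (continuous_proj.comp (hc.comp (.prodMk_left n)))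
  obtain ⟨t, ht, htC⟩ := not_subset.1 fun hsub : Ioo (0 : ℝ) 1 ⊆ _ =>
    zero_lt_one.not_ge (Cardinal.Real.Ioo_countable_iff.1 (hC.mono hsub))
  set a := lower t ⟨ht.1, ht.2.le⟩
  set b := upper t ⟨ht.1.le, ht.2⟩
  have hab : a < b := lower_lt_upper _ _
  have hproj : proj ∘ (fun n => h (a, n)) = proj ∘ (fun n => h (b, n)) := funext fun n => by
    by_contra hne
    exact htC (mem_iUnion.2 ⟨n, a, b, hab, rfl, rfl, hne⟩)
  have hinj : ∀ x, ∀ z ≠ y, h (x, z) ≠ h (x, y) := fun _ _ hz he =>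
    hz (congrArg Prod.snd (hi he))
  exact proj_comp_ne_proj_comp (hc.comp (.prodMk_right a)).continuousAt
    (hc.comp (.prodMk_right b)).continuousAt (hinj a) (hinj b)
    (fun he => hab.ne (congrArg Prod.fst (hi he))) hproj

end DoubleArrow

theorem doubleArrow_times_convergent_sequence :
    (¬ Nonempty ((DoubleArrow × OnePoint ℕ) ≃ₜ DoubleArrow)) ∧
    (∀ S : Set DoubleArrow, ¬ Nonempty ((DoubleArrow × OnePoint ℕ) ≃ₜ S)) := by
  refine ⟨fun ⟨e⟩ => ?_, fun S ⟨e⟩ => ?_⟩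
  · exact DoubleArrow.not_injective_of_continuous_prod OnePoint.infty e.continuous e.injective
  · exact DoubleArrow.not_injective_of_continuous_prod OnePoint.infty
      (continuous_subtype_val.comp e.continuous) (Subtype.val_injective.comp e.injective)
end
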